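/- Let Z and Y be simplicial sets in which every edge is invertible. If a map g : Z → Y has the right lifting property with respect to the map b(Λ[n,k]) → b(Δ[n]) for every n ≥ 1 and 0 ≤ k ≤ n, then g is a Kan fibration. -/

import Mathlib

open CategoryTheory Simplicial CategoryTheory.Limits Opposite

namespace IndexedPaper
/-- The chaotic preorder on two objects. -/
inductive TwoObj : Type where
  | zero
  | one

instance : Preorder TwoObj where
  le _ _ := True
  le_refl _ := trivial
  le_trans _ _ _ _ _ := trivial

/-- `bΔ[1]`, the nerve of the groupoid with two objects and exactly one morphism
between every ordered pair of objects. -/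
def bDelta1 : SSet := CategoryTheory.nerve TwoObj

/-- `δ : Δ[1] ⟶ bΔ[1]`, classifying the morphism from the first object to the second. -/
noncomputable def deltaB : Δ[1] ⟶ bDelta1 :=
  (SSet.yonedaEquiv (X := bDelta1) (n := ⦋1⦌)).symm
    (CategoryTheory.ComposableArrows.mk₁ (homOfLE trivial : TwoObj.zero ⟶ TwoObj.one))

/-- An edge `x : Δ[1] ⟶ X` is invertible if it extends along `δ` to `bΔ[1]`. -/
def IsInvertibleEdge {X : SSet} (x : Δ[1] ⟶ X) : Prop :=
  ∃ y : bDelta1 ⟶ X, deltaB ≫ y = x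

/-- A Kan complex: every horn (`n ≥ 1`, `0 ≤ k ≤ n`) has a filler. -/
def IsKanComplex (K : SSet) : Prop :=
  ∀ ⦃n : ℕ⦄, 1 ≤ n → ∀ (k : Fin (n + 1)) (f : (Λ[n, k] : SSet) ⟶ K),
    ∃ g : Δ[n] ⟶ K, Λ[n, k].ι ≫ g = f

/-- A Kan fibration: right lifting property with respect to all horn inclusions
(`n ≥ 1`, `0 ≤ k ≤ n`). -/
def IsKanFibration {X Y : SSet} (p : X ⟶ Y) : Prop :=
  ∀ ⦃n : ℕ⦄, 1 ≤ n → ∀ (k : Fin (n + 1)), HasLiftingProperty Λ[n, k].ι p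

/-! ### Yoneda naturality lemmas -/

lemma yE_comp {X Y : SSet} (f : X ⟶ Y) {n : SimplexCategory}
    (g : SSet.stdSimplex.obj n ⟶ X) :
    SSet.yonedaEquiv (X := Y) (n := n) (g ≫ f) = f.app (op n) (SSet.yonedaEquiv (X := X) (n := n) g) := rfl

lemma yE_symm_comp {X Y : SSet} (f : X ⟶ Y) {n : SimplexCategory} (x : X.obj (op n)) :
    (SSet.yonedaEquiv (X := Y) (n := n)).symm (f.app (op n) x) = (SSet.yonedaEquiv (X := X) (n := n)).symm x ≫ f := by
  apply (SSet.yonedaEquiv (X := Y) (n := n)).injective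
  rw [Equiv.apply_symm_apply, yE_comp, Equiv.apply_symm_apply]

lemma yE_symm_map {X : SSet} {m n : SimplexCategory} (f : m ⟶ n) (x : X.obj (op n)) :
    (SSet.yonedaEquiv (X := X) (n := m)).symm (X.map f.op x) =
      SSet.stdSimplex.map f ≫ (SSet.yonedaEquiv (X := X) (n := n)).symm x := by
  exact (SSet.yonedaEquiv_symm_naturality_left f x).symm

/-! ### The functor `G` -/

/-- The set of simplices of `X` all of whose edges are invertible. -/
def GSet (X : SSet) (n : SimplexCategoryᵒᵖ) : Set (X.obj n) :=
  {x | ∀ e : Δ[1] ⟶ SSet.stdSimplex.obj n.unop,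
    IsInvertibleEdge (e ≫ (SSet.yonedaEquiv (X := X) (n := n.unop)).symm x)}

/-- `G X`, the simplicial subset of `X` consisting of the simplices all of whose
edges are invertible. -/
def GObj (X : SSet) : SSet where
  obj n := GSet X n
  map := fun {n m} f => ↾fun x => ⟨X.map f x.1, by
    intro e
    have h := x.2 (e ≫ SSet.stdSimplex.map f.unop)
    have heq : (SSet.yonedaEquiv (X := X) (n := m.unop)).symm (X.map f x.1) =
        SSet.stdSimplex.map f.unop ≫ (SSet.yonedaEquiv (X := X) (n := n.unop)).symm x.1 :=
      yE_symm_map f.unop x.1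
    rw [heq, ← Category.assoc]
    exact h⟩
  map_id n := by
    ext x
    exact FunctorToTypes.map_id_apply X x.1
  map_comp f g := by
    ext x
    exact FunctorToTypes.map_comp_apply X f g x.1

/-- `ε_X : G X ⟶ X`, the inclusion. -/
def epsilon (X : SSet) : GObj X ⟶ X where
  app n := ↾fun x => x.1
  naturality _ _ _ := rfl

/-- The functorial action of `G` on a map of simplicial sets. -/
def Gmap {X Y : SSet} (f : X ⟶ Y) : GObj X ⟶ GObj Y where
  app n := ↾fun x => ⟨f.app n x.1, by
    intro e
    obtain ⟨y, hy⟩ := x.2 e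
    refine ⟨y ≫ f, ?_⟩
    have : (SSet.yonedaEquiv (X := Y) (n := n.unop)).symm (f.app n x.1) =
        (SSet.yonedaEquiv (X := X) (n := n.unop)).symm x.1 ≫ f := yE_symm_comp f x.1
    simp only [this, ← Category.assoc, hy]⟩
  naturality n m g := by
    ext x
    apply Subtype.ext
    first
    | exact NatTrans.naturality_apply f g x.1
    | simp [GObj]


/-! ### Homotopy category -/


structure HoObj (X : SSet.{0}) where
  pt : X _⦋0⦌

def edgeSrc {X : SSet.{0}} (e : X _⦋1⦌) : X _⦋0⦌ := X.map (SimplexCategory.δ (1 : Fin 2)).op e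

def edgeTgt {X : SSet.{0}} (e : X _⦋1⦌) : X _⦋0⦌ := X.map (SimplexCategory.δ (0 : Fin 2)).op e

instance hoQuiver (X : SSet.{0}) : Quiver (HoObj X) where
  Hom a b := {e : X _⦋1⦌ // edgeSrc e = a.pt ∧ edgeTgt e = b.pt}

inductive HoRel (X : SSet.{0}) : ∀ ⦃a b : Paths (HoObj X)⦄, (a ⟶ b) → (a ⟶ b) → Prop where
  | comp (σ : X _⦋2⦌) {a b c : HoObj X} (f : a ⟶ b) (g : b ⟶ c) (h : a ⟶ c)
      (hf : f.1 = X.map (SimplexCategory.δ (2 : Fin 3)).op σ)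
      (hg : g.1 = X.map (SimplexCategory.δ (0 : Fin 3)).op σ)
      (hh : h.1 = X.map (SimplexCategory.δ (1 : Fin 3)).op σ) :
      HoRel X (f.toPath ≫ g.toPath) h.toPath
  /-- -/
  | id {a : HoObj X} (f : a ⟶ a)
      (hf : f.1 = X.map (SimplexCategory.σ (0 : Fin 1)).op a.pt) :
      HoRel X f.toPath (𝟙 ((Paths.of (HoObj X)).obj a))

abbrev HoCat (X : SSet.{0}) := CategoryTheory.Quotient (HoRel X)

instance (X : SSet.{0}) : Category (HoCat X) := CategoryTheory.Quotient.category (HoRel X)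

/-- The prefunctor on vertices and edges induced by a simplicial map. -/
def hoPre {X Y : SSet.{0}} (f : X ⟶ Y) : HoObj X ⥤q HoObj Y where
  obj a := ⟨f.app _ a.pt⟩
  map {a b} e := ⟨f.app _ e.1, by
    constructor
    · show Y.map _ _ = _
      rw [← FunctorToTypes.naturality]
      exact congrArg (f.app _) e.2.1
    · show Y.map _ _ = _
      rw [← FunctorToTypes.naturality]
      exact congrArg (f.app _) e.2.2⟩

/-- Lift to the path category. -/
def hoLift {X Y : SSet.{0}} (f : X ⟶ Y) : Paths (HoObj X) ⥤ HoCat Y :=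
  Paths.lift ((hoPre f).comp ((Paths.of (HoObj Y)).comp (Quotient.functor (HoRel Y)).toPrefunctor))

lemma hoLift_toPath {X Y : SSet.{0}} (f : X ⟶ Y) {a b : HoObj X} (e : a ⟶ b) :
    (hoLift f).map e.toPath =
      (Quotient.functor (HoRel Y)).map ((hoPre f).map e).toPath :=
  Paths.lift_toPath _ _

/-- The induced functor on homotopy categories. -/
def hoMap {X Y : SSet.{0}} (f : X ⟶ Y) : HoCat X ⥤ HoCat Y :=
  CategoryTheory.Quotient.lift (HoRel X) (hoLift f) (by
    intro a b g₁ g₂ h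
    induction h with
    | comp σ p q r hp hq hr =>
      erw [Functor.map_comp, hoLift_toPath, hoLift_toPath, hoLift_toPath,
        ← Functor.map_comp]
      apply CategoryTheory.Quotient.sound _
      apply HoRel.comp (f.app _ σ)
      · show f.app _ p.1 = _
        rw [hp]; exact NatTrans.naturality_apply f _ σ
      · show f.app _ q.1 = _
        rw [hq]; exact NatTrans.naturality_apply f _ σ
      · show f.app _ r.1 = _
        rw [hr]; exact NatTrans.naturality_apply f _ σ
    | id p hp =>
      have h1 : (Quotient.functor (HoRel Y)).map ((hoPre f).map p).toPath =
          (Quotient.functor (HoRel Y)).map (𝟙 ((Paths.of (HoObj Y)).obj ((hoPre f).obj _))) := by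
        apply CategoryTheory.Quotient.sound
        apply HoRel.id
        show f.app _ p.1 = _
        rw [hp]; exact NatTrans.naturality_apply f _ _
      rw [hoLift_toPath, h1, CategoryTheory.Functor.map_id]
      exact ((hoLift f).map_id _).symm)



noncomputable instance : MonoidalClosed SSet.{0} :=
  inferInstanceAs (MonoidalClosed (SimplexCategoryᵒᵖ ⥤ Type 0))

/-- A map `f : A ⟶ B` of simplicial sets is a categorical equivalence if, for every
quasicategory `Q`, the induced functor `ho(Q^B) ⥤ ho(Q^A)` is an equivalence of categories. -/
def IsCatEquiv {A B : SSet.{0}} (f : A ⟶ B) : Prop :=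
  ∀ (Q : SSet.{0}), SSet.Quasicategory Q →
    (hoMap ((MonoidalClosed.pre f).app Q)).IsEquivalence

/-- A categorical fibration (isofibration): right lifting property with respect to
monomorphisms that are categorical equivalences. -/
def IsCatFibration {X Y : SSet.{0}} (p : X ⟶ Y) : Prop :=
  ∀ ⦃A B : SSet.{0}⦄ (i : A ⟶ B), Mono i → IsCatEquiv i → HasLiftingProperty i p


/-! ### b construction -/


instance horn_mono (n : ℕ) (k : Fin (n+1)) : Mono Λ[n, k].ι := by
  have : ∀ m, Mono (Λ[n, k].ι.app m) := by
    intro m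
    rw [CategoryTheory.mono_iff_injective]
    exact fun a b h => Subtype.ext h
  exact NatTrans.mono_of_mono_app _

/-- A degenerate edge. -/
def IsDegenEdge (X : SSet.{0}) (e : X.obj (op ⦋1⦌)) : Prop :=
  ∃ v : X.obj (op ⦋0⦌), e = X.map (SimplexCategory.σ (0 : Fin 1)).op v

/-- The type of nondegenerate edges of `X`. -/
def NdEdge (X : SSet.{0}) : Type := {e : X.obj (op ⦋1⦌) // ¬ IsDegenEdge X e}

lemma mono_ndEdge {X Y : SSet.{0}} (f : X ⟶ Y) [Mono f] {e : X.obj (op ⦋1⦌)}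
    (he : ¬ IsDegenEdge X e) : ¬ IsDegenEdge Y (f.app _ e) := by
  rintro ⟨v, hv⟩
  apply he
  refine ⟨X.map (SimplexCategory.δ (0 : Fin 2)).op e, ?_⟩
  have hinj : Function.Injective (f.app (op ⦋1⦌)) := by
    rw [← CategoryTheory.mono_iff_injective]
    infer_instance
  have hds : SimplexCategory.δ (0 : Fin 2) ≫ SimplexCategory.σ (0 : Fin 1) = 𝟙 (⦋0⦌ : SimplexCategory) :=
    SimplexCategory.δ_comp_σ_self' (by rfl)
  have hv2 : v = Y.map (SimplexCategory.δ (0 : Fin 2)).op (f.app _ e) := by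
    rw [hv, ← FunctorToTypes.map_comp_apply, ← op_comp, hds, op_id,
      FunctorToTypes.map_id_apply]
  have key : f.app _ (X.map (SimplexCategory.σ (0 : Fin 1)).op
      (X.map (SimplexCategory.δ (0 : Fin 2)).op e)) = f.app _ e := by
    rw [FunctorToTypes.naturality, FunctorToTypes.naturality, ← hv2, ← hv]
  exact (hinj key).symm



/-- The canonical map `∐_S Δ[1] ⟶ X` indexed by nondegenerate edges. -/
noncomputable def ndToX (X : SSet.{0}) : (∐ fun _ : NdEdge X => Δ[1]) ⟶ X :=
  Sigma.desc fun s => (SSet.yonedaEquiv (X := X) (n := ⦋1⦌)).symm s.1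

/-- The coproduct of copies of `δ : Δ[1] ⟶ bΔ[1]`. -/
noncomputable def ndToB (X : SSet.{0}) :
    (∐ fun _ : NdEdge X => Δ[1]) ⟶ (∐ fun _ : NdEdge X => bDelta1) :=
  Limits.Sigma.map fun _ => deltaB

/-- `b X`: the pushout of `∐_S Δ[1] ⟶ X` along `∐_S δ`. -/
noncomputable def bObj (X : SSet.{0}) : SSet := pushout (ndToX X) (ndToB X)

/-- The canonical map `X ⟶ b X`. -/
noncomputable def bUnit (X : SSet.{0}) : X ⟶ bObj X := pushout.inl _ _

/-- The map `b X ⟶ b Y` induced by a monomorphism `X ⟶ Y`. -/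
noncomputable def bMap {X Y : SSet.{0}} (f : X ⟶ Y) [Mono f] : bObj X ⟶ bObj Y :=
  pushout.map (ndToX X) (ndToB X) (ndToX Y) (ndToB Y) f
    (Sigma.desc fun s => Sigma.ι (fun _ : NdEdge Y => bDelta1)
      (⟨f.app _ s.1, mono_ndEdge f s.2⟩ : NdEdge Y))
    (Sigma.desc fun s => Sigma.ι (fun _ : NdEdge Y => Δ[1])
      (⟨f.app _ s.1, mono_ndEdge f s.2⟩ : NdEdge Y))
    (by
      apply Sigma.hom_ext
      intro s
      simp only [ndToX, colimit.ι_desc_assoc, Cofan.mk_ι_app, colimit.ι_desc]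
      exact (yE_symm_comp f s.1).symm)
    (by
      apply Sigma.hom_ext
      intro s
      simp [ndToB, ndToX]
      exact (Sigma.ι_map (fun _ : NdEdge Y => deltaB) _).symm)


lemma bUnit_naturality {X Y : SSet.{0}} (f : X ⟶ Y) [Mono f] :
    bUnit X ≫ bMap f = f ≫ bUnit Y := by
  simp [bUnit, bMap]
  exact pushout.inl_desc _ _ _

/-!
Since every edge of `Z` is invertible, a map `Λ[n,k] ⟶ Z` extends along `Λ[n,k] ⟶ b(Λ[n,k])`;
since every edge of `Y` is invertible, a map `Δ[n] ⟶ Y` compatible with it extends to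
`b(Δ[n]) ⟶ Y` compatibly with `b(Λ[n,k]) ⟶ b(Δ[n])`. A lift in the resulting square of
`b`'s, precomposed with `Δ[n] ⟶ b(Δ[n])`, solves the original lifting problem.
-/

section bExtension

variable {X W : SSet.{0}}

noncomputable def bEdge (s : NdEdge X) : bDelta1 ⟶ bObj X :=
  Sigma.ι (fun _ : NdEdge X => bDelta1) s ≫ pushout.inr _ _

lemma ι_ndToX (s : NdEdge X) :
    Sigma.ι (fun _ : NdEdge X => Δ[1]) s ≫ ndToX X =
      (SSet.yonedaEquiv (X := X) (n := ⦋1⦌)).symm s.1 := by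
  simp only [ndToX, colimit.ι_desc, Cofan.mk_ι_app]

lemma deltaB_comp_bEdge (s : NdEdge X) :
    deltaB ≫ bEdge s = (SSet.yonedaEquiv (X := X) (n := ⦋1⦌)).symm s.1 ≫ bUnit X := by
  have hs : deltaB ≫ Sigma.ι (fun _ : NdEdge X => bDelta1) s =
      Sigma.ι (fun _ : NdEdge X => Δ[1]) s ≫ ndToB X :=
    (Sigma.ι_map (fun _ : NdEdge X => deltaB) s).symm
  simp only [bEdge]
  erw [← Category.assoc, hs, Category.assoc, ← pushout.condition, ← Category.assoc, ι_ndToX]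
  rfl

lemma bObj_hom_ext {φ ψ : bObj X ⟶ W} (hinl : bUnit X ≫ φ = bUnit X ≫ ψ)
    (hinr : ∀ s : NdEdge X, bEdge s ≫ φ = bEdge s ≫ ψ) : φ = ψ :=
  pushout.hom_ext hinl (Sigma.hom_ext _ _ fun s =>
    (Category.assoc _ _ _).symm.trans ((hinr s).trans (Category.assoc _ _ _)))

noncomputable def bDesc (f : X ⟶ W) (e : NdEdge X → (bDelta1 ⟶ W))
    (he : ∀ s, deltaB ≫ e s = (SSet.yonedaEquiv (X := W) (n := ⦋1⦌)).symm (f.app _ s.1)) :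
    bObj X ⟶ W :=
  pushout.desc f (Sigma.desc e) (Sigma.hom_ext _ _ fun s => by
    rw [← Category.assoc, ι_ndToX, ← yE_symm_comp, ← he s, ndToB, Sigma.ι_map_assoc,
      colimit.ι_desc, Cofan.mk_ι_app])

variable (f : X ⟶ W) (e : NdEdge X → (bDelta1 ⟶ W))
  (he : ∀ s, deltaB ≫ e s = (SSet.yonedaEquiv (X := W) (n := ⦋1⦌)).symm (f.app _ s.1))

lemma bUnit_bDesc : bUnit X ≫ bDesc f e he = f :=
  pushout.inl_desc _ _ _

lemma bEdge_bDesc (s : NdEdge X) : bEdge s ≫ bDesc f e he = e s := by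
  simp only [bEdge, bDesc]
  erw [Category.assoc, pushout.inr_desc, colimit.ι_desc, Cofan.mk_ι_app]

end bExtension

lemma exists_bUnit_comp_eq {X W : SSet.{0}} (hW : ∀ x : Δ[1] ⟶ W, IsInvertibleEdge x)
    (f : X ⟶ W) : ∃ f' : bObj X ⟶ W, bUnit X ≫ f' = f := by
  choose e he using fun s : NdEdge X =>
    hW ((SSet.yonedaEquiv (X := W) (n := ⦋1⦌)).symm (f.app _ s.1))
  exact ⟨bDesc f e he, bUnit_bDesc f e he⟩

def NdEdge.map {A B : SSet.{0}} (i : A ⟶ B) [Mono i] (s : NdEdge A) : NdEdge B :=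
  ⟨i.app _ s.1, mono_ndEdge i s.2⟩

lemma bEdge_bMap {A B : SSet.{0}} (i : A ⟶ B) [Mono i] (s : NdEdge A) :
    bEdge s ≫ bMap i = bEdge (s.map i) := by
  simp only [bEdge, bMap]
  erw [Category.assoc, pushout.inr_desc, ← Category.assoc, colimit.ι_desc, Cofan.mk_ι_app]
  rfl

/-- Edges of `B` coming from `A` are extended as in `b A`, the other ones by the invertibility
of their images in `W`. -/
lemma exists_bMap_extension {A B W : SSet.{0}} (i : A ⟶ B) [Mono i]
    (hW : ∀ x : Δ[1] ⟶ W, IsInvertibleEdge x) (a : bObj A ⟶ W) (b : B ⟶ W)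
    (hab : i ≫ b = bUnit A ≫ a) :
    ∃ b' : bObj B ⟶ W, bUnit B ≫ b' = b ∧ bMap i ≫ b' = a := by
  classical
  have hi : Function.Injective (i.app (op ⦋1⦌)) :=
    (mono_iff_injective _).1 (NatTrans.mono_iff_mono_app i |>.1 inferInstance _)
  let e (t : NdEdge B) : bDelta1 ⟶ W :=
    if h : ∃ s : NdEdge A, i.app _ s.1 = t.1 then bEdge h.choose ≫ a
    else (hW ((SSet.yonedaEquiv (X := W) (n := ⦋1⦌)).symm (b.app _ t.1))).choose
  have e_of_mem (s : NdEdge A) : e (s.map i) = bEdge s ≫ a := by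
    have h : ∃ s' : NdEdge A, i.app _ s'.1 = i.app _ s.1 := ⟨s, rfl⟩
    rw [show e (s.map i) = bEdge h.choose ≫ a from dif_pos h,
      Subtype.ext (hi h.choose_spec)]
  have he (t : NdEdge B) :
      deltaB ≫ e t = (SSet.yonedaEquiv (X := W) (n := ⦋1⦌)).symm (b.app _ t.1) := by
    by_cases h : ∃ s : NdEdge A, i.app _ s.1 = t.1
    · obtain ⟨s, hs⟩ := h
      rw [show t = s.map i from Subtype.ext hs.symm, e_of_mem,
        ← Category.assoc, deltaB_comp_bEdge, Category.assoc, ← hab, ← Category.assoc,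
        ← yE_symm_comp, ← yE_symm_comp]
      rfl
    · exact (show e t = _ from dif_neg h) ▸
        (hW ((SSet.yonedaEquiv (X := W) (n := ⦋1⦌)).symm (b.app _ t.1))).choose_spec
  refine ⟨bDesc b e he, bUnit_bDesc b e he, bObj_hom_ext ?_ fun s => ?_⟩
  · rw [← Category.assoc, bUnit_naturality, Category.assoc, bUnit_bDesc, hab]
  · rw [← Category.assoc, bEdge_bMap, bEdge_bDesc, e_of_mem]

lemma hasLiftingProperty_of_bMap {A B Z Y : SSet.{0}} (i : A ⟶ B) [Mono i] (p : Z ⟶ Y)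
    [HasLiftingProperty (bMap i) p] (hZ : ∀ x : Δ[1] ⟶ Z, IsInvertibleEdge x)
    (hY : ∀ x : Δ[1] ⟶ Y, IsInvertibleEdge x) :
    HasLiftingProperty i p where
  sq_hasLift {u v} sq := by
    obtain ⟨u', hu'⟩ := exists_bUnit_comp_eq hZ u
    obtain ⟨v', hv', hiv'⟩ := exists_bMap_extension i hY (u' ≫ p) v
      (by rw [← sq.w, ← hu', Category.assoc])
    have bsq : CommSq u' (bMap i) p v' := ⟨hiv'.symm⟩
    exact ⟨⟨{ l := bUnit B ≫ bsq.lift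
              fac_left := by
                rw [← Category.assoc, ← bUnit_naturality, Category.assoc, bsq.fac_left, hu']
              fac_right := by rw [Category.assoc, bsq.fac_right, hv'] }⟩⟩

/-- If `Z` and `Y` have all edges invertible and `g : Z ⟶ Y` has the
right lifting property with respect to all maps `b(Λ[n,k]) ⟶ b(Δ[n])` (`n ≥ 1`),
then `g` is a Kan fibration. -/
theorem kan_fibration_of_rlp_b_horns {Z Y : SSet.{0}}
    (hZ : ∀ e : Δ[1] ⟶ Z, IsInvertibleEdge e)
    (hY : ∀ e : Δ[1] ⟶ Y, IsInvertibleEdge e) (g : Z ⟶ Y)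
    (h : ∀ ⦃n : ℕ⦄, 1 ≤ n → ∀ (k : Fin (n + 1)),
      HasLiftingProperty (bMap Λ[n, k].ι) g) :
    IsKanFibration g := fun _ hn k =>
  have := h hn k
  hasLiftingProperty_of_bMap _ g hZ hY

end IndexedPaper
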